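/- The 1-Wasserstein distance between Laplace distributions Lap(α₁,β₁) and Lap(α₂,β₂) with β₁ ≠ β₂ equals |α₁ − α₂| + |β₁ − β₂|·exp(−|α₁ − α₂|/|β₁ − β₂|). -/

import Mathlib

/-!
With δ = α₁ - α₂, γ = β₁ - β₂ and Q the standard Laplace quantile, the integrand is
|δ + γ Q q|. Scaling out |γ| and the symmetry Q (1 - q) = -Q q reduce everything to
∫₀¹ |c + Q| with c ≥ 0. Since ∫₀¹ Q = 0 and c + Q changes sign at b = e^{-c}/2, where
Q b = -c, this integral is c - 2 ∫₀ᵇ (c + Q) = c - 2 (c b + b Q b - b) = c + 2 b = c + e^{-c}.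
-/

open MeasureTheory Set Real

noncomputable def stdLaplaceCDF (x : ℝ) : ℝ :=
  if x < 0 then Real.exp x / 2 else 1 - Real.exp (-x) / 2

noncomputable def stdLaplaceQuantile (q : ℝ) : ℝ :=
  if q < 1 / 2 then log (2 * q) else -log (2 * (1 - q))

lemma stdLaplaceQuantile_of_le_half {q : ℝ} (hq : q ≤ 1 / 2) :
    stdLaplaceQuantile q = log (2 * q) := by
  rcases hq.lt_or_eq with hq | rfl
  · exact if_pos hq
  · norm_num [stdLaplaceQuantile]

lemma stdLaplaceQuantile_of_half_le {q : ℝ} (hq : 1 / 2 ≤ q) :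
    stdLaplaceQuantile q = -log (2 * (1 - q)) :=
  if_neg hq.not_gt

lemma stdLaplaceQuantile_one_sub (q : ℝ) :
    stdLaplaceQuantile (1 - q) = -stdLaplaceQuantile q := by
  rcases le_total q (1 / 2) with hq | hq
  · rw [stdLaplaceQuantile_of_half_le (by linarith), stdLaplaceQuantile_of_le_half hq,
      sub_sub_cancel]
  · rw [stdLaplaceQuantile_of_le_half (by linarith), stdLaplaceQuantile_of_half_le hq, neg_neg]

lemma stdLaplaceQuantile_nonneg {q : ℝ} (h₁ : 1 / 2 ≤ q) (h₂ : q ≤ 1) :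
    0 ≤ stdLaplaceQuantile q := by
  rw [stdLaplaceQuantile_of_half_le h₁, neg_nonneg]
  exact log_nonpos (by linarith) (by linarith)

lemma stdLaplaceQuantile_stdLaplaceCDF (x : ℝ) :
    stdLaplaceQuantile (stdLaplaceCDF x) = x := by
  unfold stdLaplaceCDF
  split_ifs with hx
  · have : exp x / 2 ≤ 1 / 2 := by linarith [exp_lt_one_iff.mpr hx]
    rw [stdLaplaceQuantile_of_le_half this, mul_div_cancel₀ _ two_ne_zero, log_exp]
  · have : exp (-x) / 2 ≤ 1 / 2 := by
      linarith [exp_le_one_iff.mpr (neg_nonpos.mpr (not_lt.mp hx))]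
    rw [stdLaplaceQuantile_of_half_le (by linarith), sub_sub_cancel,
      mul_div_cancel₀ _ two_ne_zero, log_exp, neg_neg]

lemma intervalIntegrable_stdLaplaceQuantile :
    IntervalIntegrable stdLaplaceQuantile volume 0 1 := by
  have lower : IntervalIntegrable stdLaplaceQuantile volume 0 (1 / 2) := by
    have h := intervalIntegral.intervalIntegrable_log' (a := 0) (b := 1) |>.comp_mul_left (c := 2)
    rw [zero_div] at h
    refine h.congr fun q hq ↦ ?_
    rw [uIoc_of_le (by norm_num)] at hq
    exact (stdLaplaceQuantile_of_le_half hq.2).symm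
  have upper : IntervalIntegrable stdLaplaceQuantile volume (1 / 2) 1 := by
    have h := (lower.comp_sub_left 1).neg.symm
    norm_num only at h
    convert h using 1
    ext q
    simp [stdLaplaceQuantile_one_sub]
  exact lower.trans upper

lemma integral_stdLaplaceQuantile : ∫ q in (0:ℝ)..1, stdLaplaceQuantile q = 0 := by
  have h := intervalIntegral.integral_comp_sub_left stdLaplaceQuantile (a := 0) (b := 1) 1
  simp only [stdLaplaceQuantile_one_sub, intervalIntegral.integral_neg, sub_zero, sub_self] at h
  linarith

lemma stdLaplaceQuantile_le_of_le_half {p q : ℝ} (hp : 0 < p) (hpq : p ≤ q) (hq : q ≤ 1 / 2) :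
    stdLaplaceQuantile p ≤ stdLaplaceQuantile q := by
  rw [stdLaplaceQuantile_of_le_half (hpq.trans hq), stdLaplaceQuantile_of_le_half hq]
  exact log_le_log (by positivity) (by linarith)

lemma stdLaplaceQuantile_le_of_le_one {p q : ℝ} (hp₀ : 0 < p) (hp : p ≤ 1 / 2) (hpq : p ≤ q)
    (hq : q ≤ 1) : stdLaplaceQuantile p ≤ stdLaplaceQuantile q := by
  rcases le_total q (1 / 2) with hq' | hq'
  · exact stdLaplaceQuantile_le_of_le_half hp₀ hpq hq'
  · exact (stdLaplaceQuantile_le_of_le_half hp₀ hp le_rfl).trans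
      (by norm_num [stdLaplaceQuantile_of_le_half, stdLaplaceQuantile_nonneg hq' hq])

lemma integral_stdLaplaceQuantile_of_le_half {b : ℝ} (hb : b ≤ 1 / 2) :
    ∫ q in (0:ℝ)..b, stdLaplaceQuantile q = b * stdLaplaceQuantile b - b := by
  have h_log : ∫ q in (0:ℝ)..b, stdLaplaceQuantile q = ∫ q in (0:ℝ)..b, log (2 * q) := by
    refine intervalIntegral.integral_congr fun q hq ↦ stdLaplaceQuantile_of_le_half ?_
    rcases mem_uIcc.mp hq with hq | hq <;> linarith [hq.2]
  rw [h_log, intervalIntegral.integral_comp_mul_left (fun q ↦ log q) two_ne_zero, integral_log,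
    stdLaplaceQuantile_of_le_half hb]
  simp only [mul_zero, log_zero, sub_zero, add_zero, smul_eq_mul]
  ring

lemma integral_abs_add_stdLaplaceQuantile_of_nonneg {c : ℝ} (hc : 0 ≤ c) :
    ∫ q in (0:ℝ)..1, |c + stdLaplaceQuantile q| = c + exp (-c) := by
  obtain ⟨b, hb_def⟩ : ∃ b, b = exp (-c) / 2 := ⟨_, rfl⟩
  have hb₀ : 0 < b := by rw [hb_def]; positivity
  have hb : b ≤ 1 / 2 := by linarith [exp_le_one_iff.mpr (neg_nonpos.mpr hc)]
  have hQb : stdLaplaceQuantile b = -c := by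
    rw [stdLaplaceQuantile_of_le_half hb, hb_def, mul_div_cancel₀ _ two_ne_zero, log_exp]
  have hQ := intervalIntegrable_stdLaplaceQuantile
  have hQ_b : IntervalIntegrable stdLaplaceQuantile volume 0 b := hQ.mono_set <| by
    rw [uIcc_of_le hb₀.le, uIcc_of_le zero_le_one]
    exact Icc_subset_Icc_right (by linarith)
  have hint := intervalIntegrable_const (c := c) |>.add hQ
  have hint_b := intervalIntegrable_const (c := c) |>.add hQ_b
  have below : ∫ q in (0:ℝ)..b, |c + stdLaplaceQuantile q|
      = -∫ q in (0:ℝ)..b, (c + stdLaplaceQuantile q) := by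
    rw [← intervalIntegral.integral_neg]
    refine intervalIntegral.integral_congr_ae (.of_forall fun q hq ↦ abs_of_nonpos ?_)
    rw [uIoc_of_le hb₀.le] at hq
    linarith [stdLaplaceQuantile_le_of_le_half hq.1 hq.2 hb]
  have above : ∫ q in b..1, |c + stdLaplaceQuantile q|
      = ∫ q in b..1, (c + stdLaplaceQuantile q) := by
    refine intervalIntegral.integral_congr fun q hq ↦ abs_of_nonneg ?_
    rw [uIcc_of_le (by linarith)] at hq
    linarith [stdLaplaceQuantile_le_of_le_one hb₀ hb hq.1 hq.2]
  have total : ∫ q in (0:ℝ)..1, (c + stdLaplaceQuantile q) = c := by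
    rw [intervalIntegral.integral_add intervalIntegrable_const hQ, integral_stdLaplaceQuantile]
    simp only [intervalIntegral.integral_const, sub_zero, smul_eq_mul, one_mul, add_zero]
  have initial : ∫ q in (0:ℝ)..b, (c + stdLaplaceQuantile q) = -b := by
    rw [intervalIntegral.integral_add intervalIntegrable_const hQ_b,
      integral_stdLaplaceQuantile_of_le_half hb, hQb]
    simp only [intervalIntegral.integral_const, sub_zero, smul_eq_mul, mul_neg]
    ring
  have hsub : uIcc b 1 ⊆ uIcc 0 1 := by
    rw [uIcc_of_le (by linarith), uIcc_of_le zero_le_one]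
    exact Icc_subset_Icc_left hb₀.le
  rw [← intervalIntegral.integral_add_adjacent_intervals hint_b.abs (hint.abs.mono_set hsub),
    below, above, ← intervalIntegral.integral_interval_sub_left hint hint_b, total, initial,
    hb_def]
  ring

lemma integral_abs_add_stdLaplaceQuantile (c : ℝ) :
    ∫ q in (0:ℝ)..1, |c + stdLaplaceQuantile q| = |c| + exp (-|c|) := by
  rcases le_total 0 c with hc | hc
  · rw [abs_of_nonneg hc, integral_abs_add_stdLaplaceQuantile_of_nonneg hc]
  · have h := intervalIntegral.integral_comp_sub_left
      (fun q ↦ |-c + stdLaplaceQuantile q|) (a := 0) (b := 1) 1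
    simp only [stdLaplaceQuantile_one_sub, sub_zero, sub_self] at h
    rw [abs_of_nonpos hc, ← integral_abs_add_stdLaplaceQuantile_of_nonneg (neg_nonneg.mpr hc),
      ← h]
    congr 1 with q
    rw [← abs_neg]
    ring_nf

lemma integral_abs_add_mul_stdLaplaceQuantile (δ : ℝ) {γ : ℝ} (hγ : γ ≠ 0) :
    ∫ q in (0:ℝ)..1, |δ + γ * stdLaplaceQuantile q| = |δ| + |γ| * exp (-|δ| / |γ|) := by
  have h : ∀ q, |δ + γ * stdLaplaceQuantile q| = |γ| * |δ / γ + stdLaplaceQuantile q| :=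
    fun q ↦ by rw [← abs_mul, mul_add, mul_div_cancel₀ _ hγ]
  simp_rw [h]
  rw [intervalIntegral.integral_const_mul, integral_abs_add_stdLaplaceQuantile, abs_div, mul_add,
    mul_div_cancel₀ _ (abs_ne_zero.mpr hγ), neg_div]

theorem wasserstein1_laplace_exact_general
    (Φinv : ℝ → ℝ) (hΦinv : ∀ q ∈ Ioo (0:ℝ) 1, stdLaplaceCDF (Φinv q) = q)
    (α₁ α₂ β₁ β₂ : ℝ) (hne : β₁ ≠ β₂) :
    ∫ q in Ioo (0:ℝ) 1, |(α₁ + β₁ * Φinv q) - (α₂ + β₂ * Φinv q)| =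
      |α₁ - α₂| + |β₁ - β₂| * Real.exp (-|α₁ - α₂| / |β₁ - β₂|) := by
  have hΦ : ∀ q ∈ Ioo (0:ℝ) 1, Φinv q = stdLaplaceQuantile q := fun q hq ↦
    (stdLaplaceQuantile_stdLaplaceCDF _).symm.trans (congrArg _ (hΦinv q hq))
  have h_eq : ∀ q ∈ Ioo (0:ℝ) 1, |(α₁ + β₁ * Φinv q) - (α₂ + β₂ * Φinv q)|
      = |(α₁ - α₂) + (β₁ - β₂) * stdLaplaceQuantile q| := fun q hq ↦ by
    rw [hΦ q hq]; ring_nf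
  rw [setIntegral_congr_fun measurableSet_Ioo h_eq, ← integral_Ioc_eq_integral_Ioo,
    ← intervalIntegral.integral_of_le zero_le_one,
    integral_abs_add_mul_stdLaplaceQuantile _ (sub_ne_zero.mpr hne)]

theorem wasserstein1_laplace_exact
    (Φinv : ℝ → ℝ) (hΦinv : ∀ q ∈ Ioo (0:ℝ) 1, stdLaplaceCDF (Φinv q) = q)
    (α₁ α₂ β₁ β₂ : ℝ) (hβ₁ : 0 < β₁) (hβ₂ : 0 < β₂) (hne : β₁ ≠ β₂) :
    ∫ q in Ioo (0:ℝ) 1, |(α₁ + β₁ * Φinv q) - (α₂ + β₂ * Φinv q)| =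
      |α₁ - α₂| + |β₁ - β₂| * Real.exp (-|α₁ - α₂| / |β₁ - β₂|) :=
  wasserstein1_laplace_exact_general Φinv hΦinv α₁ α₂ β₁ β₂ hne
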